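/- With the operations ⊣_A as above (x ⊣_A y = x if y ∈ A, else 0, on X⁰ = X ∪ {0}), the semigroup (X⁰, ⊣_A) is a strong interassociate of (X⁰, ⊣_B) if and only if A = B or A = ∅ or B = ∅. -/

import Mathlib

/-!
Write `x ⊣_A y` for `projOrZero z A x y`. For `z ∉ A` the operation `⊣_A` is associative
and has `z` as a zero, so `A = B` gives interassociativity at once, and if `A = ∅` then `⊣_A` is constantly `z`,
which makes all three axioms read `z = z`. Conversely, the mixed axiom
`x ⊣_B (y ⊣_A w) = x ⊣_A (y ⊣_B w)` with `a ∈ A`, `b ∈ B` and `x = w = a` forces `a ∈ B`,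
since otherwise the left side is `a` and the right side is `z`.
-/

open scoped Classical

noncomputable def projOrZero {α : Type*} (z : α) (A : Set α) (x y : α) : α :=
  if y ∈ A then x else z

/-- The axioms of `(α, f)` being a strong interassociate of `(α, g)`, without the semigroup laws
of `f` and `g`. -/
def StrongInterassociate {α : Type*} (f g : α → α → α) : Prop :=
  (∀ x y w, g (f x y) w = f x (g y w)) ∧ (∀ x y w, f (g x y) w = g x (f y w)) ∧
    ∀ x y w, g x (f y w) = f x (g y w)

namespace StrongInterassociate

variable {α : Type*} {f g : α → α → α}

theorem symm (h : StrongInterassociate f g) : StrongInterassociate g f :=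
  ⟨h.2.1, h.1, fun x y w => (h.2.2 x y w).symm⟩

theorem self_of_associative (f : α → α → α) [Std.Associative f] : StrongInterassociate f f :=
  ⟨Std.Associative.assoc, Std.Associative.assoc, fun _ _ _ => rfl⟩

theorem of_eq_const_left {z : α} (hf : ∀ x y, f x y = z) (hgl : ∀ x, g z x = z)
    (hgr : ∀ x, g x z = z) : StrongInterassociate f g :=
  ⟨fun x y w => by rw [hf, hf, hgl], fun x y w => by rw [hf, hf, hgr],
    fun x y w => by rw [hf, hf, hgr]⟩

end StrongInterassociate

namespace projOrZero

variable {α : Type*} {z : α} {A B : Set α}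

@[simp]
theorem apply_of_mem {x y : α} (hy : y ∈ A) : projOrZero z A x y = x := if_pos hy

@[simp]
theorem apply_of_notMem {x y : α} (hy : y ∉ A) : projOrZero z A x y = z := if_neg hy

@[simp]
theorem zero_left (y : α) : projOrZero z A z y = z := by
  unfold projOrZero; split_ifs <;> rfl

@[simp]
theorem zero_right (hA : z ∉ A) (x : α) : projOrZero z A x z = z := apply_of_notMem hA

@[simp]
theorem empty (x y : α) : projOrZero z ∅ x y = z := apply_of_notMem (Set.notMem_empty y)

theorem associative (hA : z ∉ A) : Std.Associative (projOrZero z A) where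
  assoc x y w := by
    by_cases hw : w ∈ A
    · simp [hw]
    · simp [hw, hA]

theorem strongInterassociate_empty_left (hB : z ∉ B) :
    StrongInterassociate (projOrZero z ∅) (projOrZero z B) :=
  .of_eq_const_left empty zero_left (zero_right hB)

theorem subset_of_mixed_assoc (hA : z ∉ A) (hB : B.Nonempty)
    (h : ∀ x y w, projOrZero z B x (projOrZero z A y w) = projOrZero z A x (projOrZero z B y w)) :
    A ⊆ B := by
  obtain ⟨b, hb⟩ := hB
  intro a ha
  by_contra haB
  have key := h a b a
  rw [apply_of_mem ha, apply_of_mem hb, apply_of_notMem haB, zero_right hA] at key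
  exact hA (key ▸ ha)

end projOrZero

open projOrZero in
theorem LO_tilde_zero_strong_iff {X0 : Type*} (z : X0) (A B : Set X0)
    (hA : z ∉ A) (hB : z ∉ B) :
    ((∀ x y w : X0, (fun p q => if q ∈ B then p else z)
          ((fun p q => if q ∈ A then p else z) x y) w
        = (fun p q => if q ∈ A then p else z) x
          ((fun p q => if q ∈ B then p else z) y w)) ∧
     (∀ x y w : X0, (fun p q => if q ∈ A then p else z)
          ((fun p q => if q ∈ B then p else z) x y) w
        = (fun p q => if q ∈ B then p else z) x
          ((fun p q => if q ∈ A then p else z) y w)) ∧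
     (∀ x y w : X0, (fun p q => if q ∈ B then p else z) x
          ((fun p q => if q ∈ A then p else z) y w)
        = (fun p q => if q ∈ A then p else z) x
          ((fun p q => if q ∈ B then p else z) y w)))
    ↔ (A = B ∨ A = ∅ ∨ B = ∅) := by
  change StrongInterassociate (projOrZero z A) (projOrZero z B) ↔ _
  constructor
  · rintro ⟨-, -, hmixed⟩
    rcases A.eq_empty_or_nonempty with hAe | hAne
    · exact Or.inr (Or.inl hAe)
    rcases B.eq_empty_or_nonempty with hBe | hBne
    · exact Or.inr (Or.inr hBe)
    exact Or.inl <| (subset_of_mixed_assoc hA hBne hmixed).antisymm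
      (subset_of_mixed_assoc hB hAne fun x y w => (hmixed x y w).symm)
  · rintro (rfl | rfl | rfl)
    · have := associative hA
      exact .self_of_associative _
    · exact strongInterassociate_empty_left hB
    · exact (strongInterassociate_empty_left hA).symm
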